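/- Let S = x₁,…,x_s with s > 1 be a sequence in 𝔖 satisfying S ∼ S_{r,x}. Then T = x₂,…,x_s is a principal (+)-admissible sequence on (Γ,σ_{x₁}Λ). Moreover, if S₁⋯S_r and T₁⋯T_q are the canonical forms of S and T respectively, then Supp T_q is the principal filter of (Γ₀,σ_{x₁}Λ) generated by x, and: (a) if x₁ = x, then q = r − 1 and Supp T_i = Supp S_i for 0 < i < r; (b) if x₁ ≠ x, then q = r, Supp T_i = Supp S_i for i ≠ m_S(x₁), and Supp T_i = Supp S_i \ {x₁} for i = m_S(x₁). -/

import Mathlib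

namespace KP

/-! ## Quivers on a fixed vertex set `Fin n`.

An orientation is encoded by `Λ : Fin n → Fin n → ℕ`, where `Λ a b` is the number of
arrows from `a` to `b`.  The underlying graph is recorded by `edges Λ a b = Λ a b + Λ b a`. -/

/-- The orientation `σ_x Λ` obtained by reversing every arrow incident with `x`. -/
def flipO {n : ℕ} (x : Fin n) (Λ : Fin n → Fin n → ℕ) : Fin n → Fin n → ℕ :=
  fun a b => if a = x ∨ b = x then Λ b a else Λ a b

/-- Number of edges of the underlying graph joining `a` and `b`. -/
def edges {n : ℕ} (Λ : Fin n → Fin n → ℕ) (a b : Fin n) : ℕ := Λ a b + Λ b a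

/-- `x` is a sink: no arrow starts at `x`. -/
def IsSink {n : ℕ} (Λ : Fin n → Fin n → ℕ) (x : Fin n) : Prop := ∀ y, Λ x y = 0

/-- `S` is a `(+)`-admissible sequence of vertices on `(Γ, Λ)`. -/
def Admissible {n : ℕ} (Λ : Fin n → Fin n → ℕ) : List (Fin n) → Prop
  | [] => True
  | x :: xs => IsSink Λ x ∧ Admissible (flipO x Λ) xs

/-- The orientation `Λ^S`. -/
def orientAfter {n : ℕ} (Λ : Fin n → Fin n → ℕ) : List (Fin n) → (Fin n → Fin n → ℕ)
  | [] => Λ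
  | x :: xs => orientAfter (flipO x Λ) xs

/-- Elementary move: interchange two consecutive vertices not joined by an edge. -/
inductive SwapRel {n : ℕ} (E : Fin n → Fin n → ℕ) : List (Fin n) → List (Fin n) → Prop
  | swap (l₁ l₂ : List (Fin n)) (a b : Fin n) (h : E a b = 0) :
      SwapRel E (l₁ ++ a :: b :: l₂) (l₁ ++ b :: a :: l₂)

/-- The equivalence `∼` on sequences of vertices: reflexive–transitive closure of the
(symmetric) relation `SwapRel`. -/
def Sim {n : ℕ} (E : Fin n → Fin n → ℕ) : List (Fin n) → List (Fin n) → Prop :=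
  Relation.ReflTransGen (SwapRel E)

/-- The preorder `S ⪯ T` : `T ∼ S ++ U` for some `(+)`-admissible sequence `U` on `(Γ, Λ^S)`. -/
def Preceq {n : ℕ} (Λ : Fin n → Fin n → ℕ) (S T : List (Fin n)) : Prop :=
  ∃ U, Admissible (orientAfter Λ S) U ∧ Sim (edges Λ) T (S ++ U)

/-- Support of a sequence of vertices. -/
def suppOf {n : ℕ} (S : List (Fin n)) : Set (Fin n) := {v | v ∈ S}

/-- The partial order on vertices: `x ≤ y` iff there is a path from `x` to `y` in `(Γ, Λ)`. -/
def PathLE {n : ℕ} (Λ : Fin n → Fin n → ℕ) (x y : Fin n) : Prop :=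
  Relation.ReflTransGen (fun a b => Λ a b ≠ 0) x y

/-- A filter (up-closed set) of the poset `(Γ₀, Λ)`. -/
def IsFilter {n : ℕ} (Λ : Fin n → Fin n → ℕ) (F : Set (Fin n)) : Prop :=
  ∀ x ∈ F, ∀ y, PathLE Λ x y → y ∈ F

/-- The principal filter `⟨x⟩`. -/
def upSet {n : ℕ} (Λ : Fin n → Fin n → ℕ) (x : Fin n) : Set (Fin n) := {y | PathLE Λ x y}

/-- The hull `H_Λ(F)`: the smallest filter containing `F` and every vertex joined
by an edge to a vertex of `F`. -/
def hull {n : ℕ} (Λ : Fin n → Fin n → ℕ) (F : Set (Fin n)) : Set (Fin n) :=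
  {y | ∃ x, (x ∈ F ∨ ∃ z ∈ F, edges Λ z x ≠ 0) ∧ PathLE Λ x y}

/-- `segs` is a canonical form of `S` (Proposition 2.1): `S ∼ S₁S₂⋯S_r`, each segment
consists of distinct vertices, is nonempty, and `Supp S_i = Supp (S_i S_{i+1} ⋯ S_r)`. -/
def Segments {n : ℕ} (Λ : Fin n → Fin n → ℕ) (S : List (Fin n))
    (segs : List (List (Fin n))) : Prop :=
  Admissible Λ segs.flatten ∧ Sim (edges Λ) S segs.flatten ∧
  (∀ seg ∈ segs, seg ≠ [] ∧ seg.Nodup) ∧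
  ∀ i, i < segs.length → suppOf (segs.getD i []) = suppOf ((segs.drop i).flatten)

/-- `J` is (a representative of) the join `S ∨ T` (Definition 2.4):  the canonical form of `J`
has `Supp R_i = Supp S_i ∪ Supp T_i` (out-of-range segments read as `∅`). -/
def IsJoin {n : ℕ} (Λ : Fin n → Fin n → ℕ) (S T J : List (Fin n)) : Prop :=
  ∃ CS CT CJ, Segments Λ S CS ∧ Segments Λ T CT ∧ Segments Λ J CJ ∧
    ∀ i, suppOf (CJ.getD i []) = suppOf (CS.getD i []) ∪ suppOf (CT.getD i [])

/-- `M` is (a representative of) the meet `S ∧ T` (Definition 2.4). -/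
def IsMeet {n : ℕ} (Λ : Fin n → Fin n → ℕ) (S T M : List (Fin n)) : Prop :=
  ∃ CS CT CM, Segments Λ S CS ∧ Segments Λ T CT ∧ Segments Λ M CM ∧
    ∀ i, suppOf (CM.getD i []) = suppOf (CS.getD i []) ∩ suppOf (CT.getD i [])

/-- `S` is (equivalent to) the join `T₁ ∨ ⋯ ∨ T_l` of the list of sequences `Ts`. -/
def IsJoinList {n : ℕ} (Λ : Fin n → Fin n → ℕ) : List (List (Fin n)) → List (Fin n) → Prop
  | [], S => S = []
  | T :: Ts, S => ∃ J, IsJoinList Λ Ts J ∧ IsJoin Λ T J S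

/-- The segments of a canonical form of a principal sequence `S_{r,x}` (Definition 3.1). -/
def PrincipalSegs {n : ℕ} (Λ : Fin n → Fin n → ℕ) (segs : List (List (Fin n)))
    (r : ℕ) (x : Fin n) : Prop :=
  segs.length = r ∧ 0 < r ∧
  (∀ i, i + 1 < r → suppOf (segs.getD i []) = hull Λ (suppOf (segs.getD (i+1) []))) ∧
  suppOf (segs.getD (r-1) []) = upSet Λ x

/-- `S ∼ S_{r,x}`, the principal `(+)`-admissible sequence of size `r` with
`Supp S_r = ⟨x⟩`. -/
def IsPrincipalSeq {n : ℕ} (Λ : Fin n → Fin n → ℕ) (r : ℕ) (x : Fin n)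
    (S : List (Fin n)) : Prop :=
  ∃ segs, Segments Λ S segs ∧ PrincipalSegs Λ segs r x

/-- `S` is a principal `(+)`-admissible sequence. -/
def IsPrincipal {n : ℕ} (Λ : Fin n → Fin n → ℕ) (S : List (Fin n)) : Prop :=
  ∃ r x, IsPrincipalSeq Λ r x S


/-! ## Representations of `(Γ, Λ)` over a field `k`. -/

/-- A (finite-dimensional) representation of the quiver `(Γ, Λ)` over `k`:
the space at vertex `x` is `Fin (d x) → k`, and each arrow carries a linear map. -/
structure Rep (k : Type) [Field k] (n : ℕ) (Λ : Fin n → Fin n → ℕ) where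
  d : Fin n → ℕ
  f : ∀ a b : Fin n, Fin (Λ a b) → ((Fin (d a) → k) →ₗ[k] (Fin (d b) → k))

variable {k : Type} [Field k] {n : ℕ}

/-- A morphism of representations. -/
structure RepHom {Λ : Fin n → Fin n → ℕ} (M N : Rep k n Λ) where
  g : ∀ x, (Fin (M.d x) → k) →ₗ[k] (Fin (N.d x) → k)
  comm : ∀ a b i v, g b (M.f a b i v) = N.f a b i (g a v)

/-- Isomorphism of representations. -/
def RepIso {Λ : Fin n → Fin n → ℕ} (M N : Rep k n Λ) : Prop :=
  ∃ g : ∀ x, (Fin (M.d x) → k) ≃ₗ[k] (Fin (N.d x) → k),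
    ∀ a b i v, g b (M.f a b i v) = N.f a b i (g a v)

/-- The zero representation. -/
def IsZeroRep {Λ : Fin n → Fin n → ℕ} (M : Rep k n Λ) : Prop := ∀ x, M.d x = 0

/-- Cast between the standard spaces. -/
def castL (k : Type) [Field k] {m m' : ℕ} (h : m = m') : (Fin m → k) ≃ₗ[k] (Fin m' → k) :=
  LinearEquiv.funCongrLeft k k (finCongr h.symm)

/-- The splitting `(Fin (m + p) → k) ≃ₗ (Fin m → k) × (Fin p → k)`. -/
def splitL (k : Type) [Field k] (m p : ℕ) : (Fin (m + p) → k) ≃ₗ[k] (Fin m → k) × (Fin p → k) :=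
  (LinearEquiv.funCongrLeft k k finSumFinEquiv).trans
    (LinearEquiv.sumArrowLequivProdArrow _ _ k k)

/-- Direct sum of two representations. -/
def dSum {Λ : Fin n → Fin n → ℕ} (M N : Rep k n Λ) : Rep k n Λ where
  d x := M.d x + N.d x
  f a b i :=
    (splitL k (M.d b) (N.d b)).symm.toLinearMap ∘ₗ
      (LinearMap.prodMap (M.f a b i) (N.f a b i)) ∘ₗ (splitL k (M.d a) (N.d a)).toLinearMap

/-- The zero representation (as an object). -/
def zeroRep (k : Type) [Field k] (n : ℕ) (Λ : Fin n → Fin n → ℕ) : Rep k n Λ where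
  d _ := 0
  f _ _ _ := 0

/-- Direct sum of a list of representations. -/
def dSumList {Λ : Fin n → Fin n → ℕ} (L : List (Rep k n Λ)) : Rep k n Λ :=
  L.foldr dSum (zeroRep k n Λ)

/-- `M` is indecomposable. -/
def Indecomp {Λ : Fin n → Fin n → ℕ} (M : Rep k n Λ) : Prop :=
  ¬ IsZeroRep M ∧ ∀ A B : Rep k n Λ, RepIso M (dSum A B) → IsZeroRep A ∨ IsZeroRep B

/-- `X` is a direct summand of `M`. -/
def IsSummand {Λ : Fin n → Fin n → ℕ} (X M : Rep k n Λ) : Prop :=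
  ∃ Y, RepIso M (dSum X Y)

/-! ### Reflection functors (on objects) -/

/-- Index type of the arrows ending at `x`. -/
abbrev Arin {n : ℕ} (Λ : Fin n → Fin n → ℕ) (x : Fin n) := Σ y : Fin n, Fin (Λ y x)

/-- Index type of the arrows starting at `x`. -/
abbrev Aout {n : ℕ} (Λ : Fin n → Fin n → ℕ) (x : Fin n) := Σ y : Fin n, Fin (Λ x y)

/-- The map `h : ⊕_{a : y → x} V(y) → V(x)` induced by the maps along the arrows ending at `x`. -/
noncomputable def inMap (Λ : Fin n → Fin n → ℕ) (M : Rep k n Λ) (x : Fin n) :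
    ((p : Arin Λ x) → (Fin (M.d p.1) → k)) →ₗ[k] (Fin (M.d x) → k) :=
  ∑ p : Arin Λ x, (M.f p.1 x p.2) ∘ₗ LinearMap.proj p

/-- The map `h' : V(x) → ⊕_{a : x → y} V(y)` induced by the maps along arrows starting at `x`. -/
def outMap (Λ : Fin n → Fin n → ℕ) (M : Rep k n Λ) (x : Fin n) :
    (Fin (M.d x) → k) →ₗ[k] ((p : Aout Λ x) → (Fin (M.d p.1) → k)) :=
  LinearMap.pi fun p => M.f x p.1 p.2

noncomputable def kerEquiv (Λ : Fin n → Fin n → ℕ) (M : Rep k n Λ) (x : Fin n) :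
    LinearMap.ker (inMap Λ M x) ≃ₗ[k]
      (Fin (Module.finrank k (LinearMap.ker (inMap Λ M x))) → k) :=
  (Module.finBasis k _).equivFun

noncomputable def cokerEquiv (Λ : Fin n → Fin n → ℕ) (M : Rep k n Λ) (x : Fin n) :
    (((p : Aout Λ x) → (Fin (M.d p.1) → k)) ⧸ LinearMap.range (outMap Λ M x)) ≃ₗ[k]
      (Fin (Module.finrank k (((p : Aout Λ x) → (Fin (M.d p.1) → k)) ⧸
        LinearMap.range (outMap Λ M x))) → k) :=
  (Module.finBasis k _).equivFun

/-- The positive reflection functor `F_x⁺` (on objects): the space at `x` is replaced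
by the kernel of `inMap`, with the maps along the reversed arrows induced by inclusion
followed by the projections. -/
noncomputable def reflPlus (x : Fin n) (Λ : Fin n → Fin n → ℕ) (M : Rep k n Λ) :
    Rep k n (flipO x Λ) where
  d z := if z = x then Module.finrank k (LinearMap.ker (inMap Λ M x)) else M.d z
  f a b i :=
    if ha : a = x then
      if hb : b = x then 0
      else
        (castL k (if_neg hb).symm).toLinearMap ∘ₗ
          (LinearMap.proj (φ := fun p : Arin Λ x => Fin (M.d p.1) → k)
            (⟨b, Fin.cast (by subst ha; simp [flipO]) i⟩ : Arin Λ x)) ∘ₗ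
          (LinearMap.ker (inMap Λ M x)).subtype ∘ₗ
          (kerEquiv Λ M x).symm.toLinearMap ∘ₗ (castL k (if_pos ha)).toLinearMap
    else
      if hb : b = x then 0
      else
        (castL k (if_neg hb).symm).toLinearMap ∘ₗ
          M.f a b (Fin.cast (by simp [flipO, ha, hb]) i) ∘ₗ
          (castL k (if_neg ha)).toLinearMap

/-- The negative reflection functor `F_x⁻` (on objects), presented as a map from
representations of `(Γ, σ_x Λ)` to representations of `(Γ, Λ)`: the space at `x` is
replaced by the cokernel of `outMap`. -/
noncomputable def reflMinus (x : Fin n) (Λ : Fin n → Fin n → ℕ)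
    (N : Rep k n (flipO x Λ)) : Rep k n Λ where
  d z := if z = x then
      Module.finrank k (((p : Aout (flipO x Λ) x) → (Fin (N.d p.1) → k)) ⧸
        LinearMap.range (outMap (flipO x Λ) N x))
    else N.d z
  f a b i :=
    if hb : b = x then
      if ha : a = x then 0
      else
        (castL k (if_pos hb).symm).toLinearMap ∘ₗ
          (cokerEquiv (flipO x Λ) N x).toLinearMap ∘ₗ
          (LinearMap.range (outMap (flipO x Λ) N x)).mkQ ∘ₗ
          (LinearMap.single k (fun p : Aout (flipO x Λ) x => Fin (N.d p.1) → k)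
            (⟨a, Fin.cast (by subst hb; simp [flipO]) i⟩ : Aout (flipO x Λ) x)) ∘ₗ
          (castL k (if_neg ha)).toLinearMap
    else
      if ha : a = x then 0
      else
        (castL k (if_neg hb).symm).toLinearMap ∘ₗ
          N.f a b (Fin.cast (by simp [flipO, ha, hb]) i) ∘ₗ
          (castL k (if_neg ha)).toLinearMap

/-- `F(S) = F_{x_s}⁺ ⋯ F_{x_1}⁺` applied to a representation. -/
noncomputable def FList : (S : List (Fin n)) → (Λ : Fin n → Fin n → ℕ) → Rep k n Λ →
    Rep k n (orientAfter Λ S)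
  | [], _, M => M
  | x :: xs, Λ, M => FList xs (flipO x Λ) (reflPlus x Λ M)

/-- `S` annihilates `M` : `F(S) M = 0`. -/
def Annihilates (Λ : Fin n → Fin n → ℕ) (S : List (Fin n)) (M : Rep k n Λ) : Prop :=
  IsZeroRep (FList S Λ M)

/-- `M` is preprojective: some `(+)`-admissible sequence annihilates it. -/
def Preprojective (Λ : Fin n → Fin n → ℕ) (M : Rep k n Λ) : Prop :=
  ∃ S, Admissible Λ S ∧ Annihilates Λ S M

/-- `S` is a shortest `(+)`-admissible sequence annihilating `M` : it annihilates `M` and no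
proper subsequence of `S` annihilates `M`.  (This predicate is invariant under `∼`, so it
expresses `S ∼ S_M`.) -/
def IsShortestAnn (Λ : Fin n → Fin n → ℕ) (M : Rep k n Λ) (S : List (Fin n)) : Prop :=
  Admissible Λ S ∧ Annihilates Λ S M ∧
  ∀ S', Admissible Λ S' → Annihilates Λ S' M → Preceq Λ S' S → Sim (edges Λ) S' S

/-- The simple representation `L_x` concentrated at the vertex `x`. -/
def simpleRep (Λ : Fin n → Fin n → ℕ) (x : Fin n) : Rep k n Λ where
  d z := if z = x then 1 else 0
  f _ _ _ := 0

/-- `M(S) = F_{x₁}⁻ F_{x₂}⁻ ⋯ F_{x_{s-1}}⁻ (L_{x_s})`, where `L_{x_s}` is the simple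
(projective) module over `k(Γ, σ_{x_{s-1}} ⋯ σ_{x_1} Λ)` at the vertex `x_s`. -/
noncomputable def Mof : (Λ : Fin n → Fin n → ℕ) → (S : List (Fin n)) → Rep k n Λ
  | Λ, [] => zeroRep k n Λ
  | Λ, [x] => simpleRep Λ x
  | Λ, x :: y :: ys => reflMinus x Λ (Mof (flipO x Λ) (y :: ys))

variable {n : ℕ}

/-! ## The Weyl group -/

/-- The simple reflection `σ_i` attached to a generalized Cartan matrix `A`,
as a linear endomorphism of `ℤⁿ` : `σ_i(v) = v - (∑ l, a_{il} v_l) e_i`. -/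
def sigmaL (A : Fin n → Fin n → ℤ) (i : Fin n) : (Fin n → ℤ) →ₗ[ℤ] (Fin n → ℤ) where
  toFun v := v - (∑ l, A i l * v l) • Pi.single i 1
  map_add' v w := by
    simp only [Pi.add_apply, mul_add, Finset.sum_add_distrib, add_smul]
    abel
  map_smul' c v := by
    simp only [Pi.smul_apply, smul_eq_mul, RingHom.id_apply, smul_sub]
    congr 1
    rw [smul_smul, Finset.mul_sum]
    congr 1
    exact Finset.sum_congr rfl fun l _ => by ring

theorem sigma_invol (A : Fin n → Fin n → ℤ) (hA : ∀ i, A i i = 2) (i : Fin n) :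
    (sigmaL A i).comp (sigmaL A i) = LinearMap.id := by
  apply LinearMap.ext
  intro v
  simp only [LinearMap.comp_apply, LinearMap.id_apply, sigmaL, LinearMap.coe_mk, AddHom.coe_mk]
  set c := ∑ l, A i l * v l with hc
  set s : Fin n → ℤ := Pi.single i 1 with hs
  have h1 : ∑ l, A i l * (v - c • s) l = -c := by
    have h2 : ∀ l, A i l * (v - c • s) l = A i l * v l - c * (A i l * s l) := fun l => by
      simp only [Pi.sub_apply, Pi.smul_apply, smul_eq_mul]
      ring
    rw [Finset.sum_congr rfl fun l _ => h2 l, Finset.sum_sub_distrib, ← Finset.mul_sum]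
    have h3 : ∑ l, A i l * s l = 2 := by
      rw [Finset.sum_eq_single i]
      · simp [hs, hA i]
      · intro b _ hb
        simp [hs, Pi.single_eq_of_ne hb]
      · simp
    rw [h3, ← hc]
    ring
  rw [h1]
  ext j
  simp only [Pi.sub_apply, Pi.smul_apply, smul_eq_mul]
  ring

/-- The simple reflection `σ_i` as an automorphism of `ℤⁿ`. -/
def sigmaE (A : Fin n → Fin n → ℤ) (hA : ∀ i, A i i = 2) (i : Fin n) :
    (Fin n → ℤ) ≃ₗ[ℤ] (Fin n → ℤ) :=
  LinearEquiv.ofLinear (sigmaL A i) (sigmaL A i) (sigma_invol A hA i) (sigma_invol A hA i)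

/-- The length `ℓ(w)`: the least `l ≥ 0` such that `w` is a product of `l` simple
reflections. -/
noncomputable def wordLen (A : Fin n → Fin n → ℤ) (hA : ∀ i, A i i = 2)
    (w : (Fin n → ℤ) ≃ₗ[ℤ] (Fin n → ℤ)) : ℕ :=
  sInf {l | ∃ ys : List (Fin n), ys.length = l ∧ w = (ys.map (sigmaE A hA)).prod}

/-- The word `w(S) = σ_{x_s} ⋯ σ_{x_1}` associated to a sequence `S = x₁, …, x_s`. -/
def wordOf (A : Fin n → Fin n → ℤ) (hA : ∀ i, A i i = 2) (S : List (Fin n)) :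
    (Fin n → ℤ) ≃ₗ[ℤ] (Fin n → ℤ) :=
  ((S.reverse).map (sigmaE A hA)).prod

/-- The symmetric generalized Cartan matrix of the underlying graph of `(Γ, Λ)`. -/
def cartanOf (Λ : Fin n → Fin n → ℕ) : Fin n → Fin n → ℤ :=
  fun i j => if i = j then 2 else -(edges Λ i j : ℤ)

theorem cartan_diag (Λ : Fin n → Fin n → ℕ) : ∀ i, cartanOf Λ i i = 2 := by
  intro i; simp [cartanOf]

/-- The simple reflections of the Weyl group of the underlying graph of `(Γ, Λ)`. -/
def wSig (Λ : Fin n → Fin n → ℕ) : Fin n → ((Fin n → ℤ) ≃ₗ[ℤ] (Fin n → ℤ)) :=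
  sigmaE (cartanOf Λ) (cartan_diag Λ)

/-- `w(S)` for a sequence of vertices of `(Γ, Λ)`. -/
def wordOfSeq (Λ : Fin n → Fin n → ℕ) (S : List (Fin n)) :
    (Fin n → ℤ) ≃ₗ[ℤ] (Fin n → ℤ) :=
  ((S.reverse).map (wSig Λ)).prod

/-- The word `w(S)` is reduced: `ℓ(w(S))` equals the number of letters of `S`. -/
noncomputable def IsReducedSeq (Λ : Fin n → Fin n → ℕ) (S : List (Fin n)) : Prop :=
  wordLen (cartanOf Λ) (cartan_diag Λ) (wordOfSeq Λ S) = S.length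

/-! ## Dynkin graphs of types A, D, E -/

def edgeA (n : ℕ) : Fin n → Fin n → ℕ := fun i j =>
  if (i : ℕ) + 1 = (j : ℕ) ∨ (j : ℕ) + 1 = (i : ℕ) then 1 else 0

def edgeD (n : ℕ) : Fin n → Fin n → ℕ := fun i j =>
  if ((i : ℕ) = 0 ∧ (j : ℕ) = 2) ∨ ((j : ℕ) = 0 ∧ (i : ℕ) = 2) ∨
     ((i : ℕ) = 1 ∧ (j : ℕ) = 2) ∨ ((j : ℕ) = 1 ∧ (i : ℕ) = 2) ∨
     (2 ≤ (i : ℕ) ∧ (i : ℕ) + 1 = (j : ℕ)) ∨ (2 ≤ (j : ℕ) ∧ (j : ℕ) + 1 = (i : ℕ))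
  then 1 else 0

def edgeE (n : ℕ) : Fin n → Fin n → ℕ := fun i j =>
  if ((i : ℕ) + 1 = (j : ℕ) ∧ (j : ℕ) ≤ n - 2) ∨ ((j : ℕ) + 1 = (i : ℕ) ∧ (i : ℕ) ≤ n - 2) ∨
     ((i : ℕ) = 2 ∧ (j : ℕ) = n - 1) ∨ ((j : ℕ) = 2 ∧ (i : ℕ) = n - 1)
  then 1 else 0

/-- The underlying graph (given by its edge-count function `E`) is a Dynkin diagram of
type `A`, `D`, or `E`. -/
def IsDynkinADE (n : ℕ) (E : Fin n → Fin n → ℕ) : Prop :=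
  ∃ e : Fin n ≃ Fin n,
    (∀ i j, E i j = edgeA n (e i) (e j)) ∨
    (4 ≤ n ∧ ∀ i j, E i j = edgeD n (e i) (e j)) ∨
    ((n = 6 ∨ n = 7 ∨ n = 8) ∧ ∀ i j, E i j = edgeE n (e i) (e j))

/-! ## Coxeter-sortable elements -/

/-- Lexicographic comparison of index tuples. -/
def lexLE {s : ℕ} (ι ι' : Fin s → ℕ) : Prop :=
  ι = ι' ∨ ∃ j, (∀ j', j' < j → ι j' = ι' j') ∧ ι j < ι' j

/-- `w` is `c`-sortable for the Coxeter element determined by the half-infinite word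
`cseq` (with dividers every `blockLen` letters): the lexicographically first subsequence
of `cseq` that is a reduced word for `w` defines a sequence of subsets (between adjacent
dividers) that is decreasing under inclusion. -/
def CSortable (A : Fin n → Fin n → ℤ) (hA : ∀ i, A i i = 2) (cseq : ℕ → Fin n)
    (blockLen : ℕ) (w : (Fin n → ℤ) ≃ₗ[ℤ] (Fin n → ℤ)) : Prop :=
  ∃ (s : ℕ) (ι : Fin s → ℕ), StrictMono ι ∧
    w = ((List.ofFn fun j => cseq (ι j)).map (sigmaE A hA)).prod ∧
    wordLen A hA w = s ∧
    (∀ ι' : Fin s → ℕ, StrictMono ι' →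
      w = ((List.ofFn fun j => cseq (ι' j)).map (sigmaE A hA)).prod → lexLE ι ι') ∧
    ∀ m : ℕ, {a : Fin n | ∃ j, (ι j) / blockLen = m + 1 ∧ cseq (ι j) = a} ⊆
             {a : Fin n | ∃ j, (ι j) / blockLen = m ∧ cseq (ι j) = a}


/-- A nonzero non-isomorphism between representations. -/
def RepStep {k : Type} [Field k] {n : ℕ} {Λ : Fin n → Fin n → ℕ} (X Y : Rep k n Λ) : Prop :=
  ∃ f : RepHom X Y, (∃ x v, f.g x v ≠ 0) ∧ ¬ ∀ x, Function.Bijective (f.g x)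

/-- `v` is a minimal element of `D` in the poset `(Γ₀, Λ)`. -/
def MinimalIn {n : ℕ} (Λ : Fin n → Fin n → ℕ) (D : Set (Fin n)) (v : Fin n) : Prop :=
  v ∈ D ∧ ∀ u ∈ D, PathLE Λ u v → u = v

/-- The pairs `(h, v)` of Proposition 3.2(a): `0 < h ≤ r` and `v` a minimal element of
`Supp S_h \ H_Λ(Supp S_{h+1})` (with `Supp S_{r+1} = ∅`). -/
def JoinPair {n : ℕ} (Λ : Fin n → Fin n → ℕ) (segs : List (List (Fin n)))
    (p : ℕ × Fin n) : Prop :=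
  0 < p.1 ∧ p.1 ≤ segs.length ∧
  MinimalIn Λ (suppOf (segs.getD (p.1 - 1) []) \ hull Λ (suppOf (segs.getD p.1 []))) p.2


/-!
In a canonical form `S₁ ⋯ S_r` of `S`, the support of `S_i` is the set of vertices occurring at
least `i` times in `S`; so canonical forms, and principality, are statements about
multiplicities. Deleting the first letter `x₁` lowers only `m_S(x₁)`, hence changes only the
`m_S(x₁)`-th support, by removing `x₁`. It remains to follow the hulls through the reflection
`σ_{x₁}` at the sink `x₁`: a hull whose base contains `x₁` and all its neighbours does not change,
and a hull whose base avoids `x₁` and its neighbours only loses `x₁`. The combinatorial input is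
that two adjacent vertices occur alternately in an admissible sequence, so that no neighbour of
`x₁` occurs in `S` more often than `x₁`.
-/

section Orientation

variable {Λ : Fin n → Fin n → ℕ}

theorem flipO_of_ne (Λ : Fin n → Fin n → ℕ) {x a b : Fin n} (ha : a ≠ x) (hb : b ≠ x) :
    flipO x Λ a b = Λ a b := by
  simp [flipO, ha, hb]

theorem flipO_self_left (x : Fin n) (Λ : Fin n → Fin n → ℕ) (b : Fin n) :
    flipO x Λ x b = Λ b x := by
  simp [flipO]

theorem edges_flipO (x : Fin n) (Λ : Fin n → Fin n → ℕ) : edges (flipO x Λ) = edges Λ := by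
  funext a b
  unfold edges flipO
  by_cases ha : a = x <;> by_cases hb : b = x <;> simp [ha, hb, Nat.add_comm]

theorem edges_orientAfter (Λ : Fin n → Fin n → ℕ) (W : List (Fin n)) :
    edges (orientAfter Λ W) = edges Λ := by
  induction W generalizing Λ with
  | nil => rfl
  | cons z W ih => exact (ih _).trans (edges_flipO z Λ)

theorem admissible_cons {z : Fin n} {W : List (Fin n)} :
    Admissible Λ (z :: W) ↔ IsSink Λ z ∧ Admissible (flipO z Λ) W :=
  Iff.rfl

theorem admissible_append {A B : List (Fin n)} :
    Admissible Λ (A ++ B) ↔ Admissible Λ A ∧ Admissible (orientAfter Λ A) B := by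
  induction A generalizing Λ with
  | nil => simp [Admissible, orientAfter]
  | cons z A ih => simp [admissible_cons, ih, orientAfter, and_assoc]

theorem flipO_comm {a b : Fin n} (hab : Λ a b = 0) (hba : Λ b a = 0) :
    flipO a (flipO b Λ) = flipO b (flipO a Λ) := by
  funext u v
  unfold flipO
  by_cases hua : u = a <;> by_cases hub : u = b <;> by_cases hva : v = a <;>
    by_cases hvb : v = b <;> simp_all

theorem isSink_flipO_iff {a b : Fin n} (hne : b ≠ a) (hab : Λ a b = 0) (hba : Λ b a = 0) :
    IsSink (flipO a Λ) b ↔ IsSink Λ b := by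
  refine forall_congr' fun y => ?_
  by_cases hy : y = a
  · subst hy
    simp [flipO, hab, hba]
  · rw [flipO_of_ne Λ hne hy]

theorem Admissible.swap_head {a b : Fin n} {W : List (Fin n)} (h : edges Λ a b = 0)
    (hadm : Admissible Λ (a :: b :: W)) : Admissible Λ (b :: a :: W) := by
  obtain ⟨ha, hb, hW⟩ := hadm
  have hab : Λ a b = 0 := by unfold edges at h; omega
  have hba : Λ b a = 0 := by unfold edges at h; omega
  rcases eq_or_ne a b with rfl | hne
  · exact ⟨ha, hb, hW⟩
  exact ⟨(isSink_flipO_iff hne.symm hab hba).1 hb, (isSink_flipO_iff hne hba hab).2 ha,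
    by rwa [flipO_comm hab hba]⟩

/-- Along an admissible sequence `b` must be reflected before `a` can become a sink, after which
the arrow points from `b` to `a`: the occurrences of `a` and `b` alternate, starting with `b`. -/
theorem Admissible.count_le_count_of_arrow {W : List (Fin n)} {a b : Fin n}
    (hadm : Admissible Λ W) (hab : Λ a b ≠ 0) :
    W.count a ≤ W.count b ∧ W.count b ≤ W.count a + 1 := by
  induction W generalizing Λ a b with
  | nil => simp
  | cons w W ih =>
    obtain ⟨hw, hW⟩ := admissible_cons.1 hadm
    have haw : w ≠ a := by rintro rfl; exact hab (hw b)
    by_cases hbw : w = b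
    · subst hbw
      have := ih hW (a := w) (b := a) (by rwa [flipO_self_left])
      rw [List.count_cons_self, List.count_cons_of_ne haw]
      omega
    · rw [List.count_cons_of_ne haw, List.count_cons_of_ne hbw]
      exact ih hW (by rwa [flipO_of_ne Λ (Ne.symm haw) (Ne.symm hbw)])

theorem Admissible.count_le_count_head {a b : Fin n} {W : List (Fin n)}
    (hadm : Admissible Λ (a :: W)) (he : edges Λ b a ≠ 0) :
    (a :: W).count b ≤ (a :: W).count a := by
  have hab : Λ a b = 0 := (admissible_cons.1 hadm).1 b
  exact (hadm.count_le_count_of_arrow (by unfold edges at he; omega)).1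

end Orientation

section Swaps

variable {E : Fin n → Fin n → ℕ} {U V W W' : List (Fin n)}

theorem SwapRel.perm (h : SwapRel E W W') : W.Perm W' := by
  obtain ⟨l₁, l₂, a, b, -⟩ := h
  exact .append_left _ (.swap _ _ _)

theorem Sim.perm (h : Sim E W W') : W.Perm W' := by
  induction h with
  | refl => exact .refl _
  | tail _ hs ih => exact ih.trans hs.perm

theorem SwapRel.admissible {Λ : Fin n → Fin n → ℕ} (h : SwapRel (edges Λ) W W')
    (hadm : Admissible Λ W) : Admissible Λ W' := by
  obtain ⟨l₁, l₂, a, b, he⟩ := h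
  rw [admissible_append] at hadm ⊢
  exact ⟨hadm.1, hadm.2.swap_head (by rwa [edges_orientAfter])⟩

theorem Sim.admissible {Λ : Fin n → Fin n → ℕ} (h : Sim (edges Λ) W W')
    (hadm : Admissible Λ W) : Admissible Λ W' := by
  induction h with
  | refl => exact hadm
  | tail _ hs ih => exact hs.admissible ih

theorem SwapRel.append_left (X : List (Fin n)) (h : SwapRel E U V) :
    SwapRel E (X ++ U) (X ++ V) := by
  obtain ⟨l₁, l₂, a, b, he⟩ := h
  simpa using SwapRel.swap (X ++ l₁) l₂ a b he

theorem Sim.append_left (X : List (Fin n)) (h : Sim E U V) : Sim E (X ++ U) (X ++ V) :=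
  Relation.ReflTransGen.lift (X ++ ·) (fun _ _ hs => SwapRel.append_left X hs) _ _ h

theorem sim_cons_append {z : Fin n} {B : List (Fin n)} (hB : ∀ b ∈ B, E z b = 0)
    (Y : List (Fin n)) : Sim E (z :: (B ++ Y)) (B ++ z :: Y) := by
  induction B with
  | nil => exact .refl
  | cons b B ih =>
    refine .head (by simpa using SwapRel.swap [] (B ++ Y) z b (hB b (by simp))) ?_
    exact Sim.append_left [b] (ih fun c hc => hB c (by simp [hc]))

end Swaps

section CanonicalForm

variable {α : Type*} [DecidableEq α]

def IsSegmentChain : List (List α) → Prop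
  | [] => True
  | L :: rest => L ≠ [] ∧ L.Nodup ∧ (∀ v ∈ rest.flatten, v ∈ L) ∧ IsSegmentChain rest

def levelSet (W : List α) (i : ℕ) : Set α := {v | i < W.count v}

@[simp]
theorem mem_levelSet {W : List α} {i : ℕ} {v : α} : v ∈ levelSet W i ↔ i < W.count v :=
  Iff.rfl

theorem IsSegmentChain.mem_getD_iff {segs : List (List α)} (h : IsSegmentChain segs)
    (i : ℕ) (v : α) : v ∈ segs.getD i [] ↔ i < segs.flatten.count v := by
  induction segs generalizing i with
  | nil => simp
  | cons L rest ih =>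
    obtain ⟨-, hnd, hsub, hrest⟩ := h
    have hL : L.count v ≤ 1 := List.nodup_iff_count_le_one.1 hnd v
    have hinL : 0 < rest.flatten.count v → 0 < L.count v := fun hpos =>
      List.count_pos_iff.2 (hsub v (List.count_pos_iff.1 hpos))
    rw [List.flatten_cons, List.count_append]
    cases i with
    | zero =>
      rw [List.getD_cons_zero, ← List.count_pos_iff]
      omega
    | succ i =>
      rw [List.getD_cons_succ, ih hrest]
      omega

theorem IsSegmentChain.count_le_length {segs : List (List α)} (h : IsSegmentChain segs)
    (v : α) : segs.flatten.count v ≤ segs.length := by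
  by_contra hlt
  simpa using (h.mem_getD_iff segs.length v).2 (by omega)

theorem levelSet_cons_of_ne {a : α} {l : List α} {i : ℕ} (h : i + 1 ≠ (a :: l).count a) :
    levelSet l i = levelSet (a :: l) i := by
  ext v
  by_cases hv : v = a
  · subst hv
    show i < l.count v ↔ i < (v :: l).count v
    rw [List.count_cons_self] at h ⊢
    omega
  · simp [levelSet, List.count_cons_of_ne (Ne.symm hv)]

theorem levelSet_cons_of_le {a : α} {l : List α} {i : ℕ} (h : (a :: l).count a ≤ i + 1) :
    levelSet l i = levelSet (a :: l) i \ {a} := by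
  ext v
  by_cases hv : v = a
  · subst hv
    rw [List.count_cons_self] at h
    simp [levelSet]
    omega
  · simp [levelSet, hv, List.count_cons_of_ne (Ne.symm hv)]

end CanonicalForm

section Segments

variable {Λ : Fin n → Fin n → ℕ} {W : List (Fin n)} {segs : List (List (Fin n))}

theorem isSegmentChain_iff :
    IsSegmentChain segs ↔ (∀ seg ∈ segs, seg ≠ [] ∧ seg.Nodup) ∧
      ∀ i, i < segs.length → suppOf (segs.getD i []) = suppOf ((segs.drop i).flatten) := by
  induction segs with
  | nil => simp [IsSegmentChain]
  | cons L rest ih =>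
    have hhead : suppOf L = suppOf (L ++ rest.flatten) ↔ ∀ v ∈ rest.flatten, v ∈ L := by
      simp [Set.ext_iff, suppOf]
    simp only [IsSegmentChain, ih, List.forall_mem_cons, List.length_cons,
      Nat.forall_lt_succ_left', List.getD_cons_zero, List.drop_zero, List.flatten_cons,
      List.getD_cons_succ, List.drop_succ_cons, hhead]
    tauto

theorem segments_iff :
    Segments Λ W segs ↔
      Admissible Λ segs.flatten ∧ Sim (edges Λ) W segs.flatten ∧ IsSegmentChain segs := by
  rw [isSegmentChain_iff]
  rfl

theorem Segments.suppOf_getD (h : Segments Λ W segs) (i : ℕ) :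
    suppOf (segs.getD i []) = levelSet W i := by
  ext v
  exact ((segments_iff.1 h).2.2.mem_getD_iff i v).trans (by rw [← h.2.1.perm.count_eq v]; rfl)

theorem Segments.count_le_length (h : Segments Λ W segs) (v : Fin n) :
    W.count v ≤ segs.length :=
  h.2.1.perm.count_eq v ▸ (segments_iff.1 h).2.2.count_le_length v

theorem Segments.length_eq (h : Segments Λ W segs) {N : ℕ} (hle : ∀ v, W.count v ≤ N)
    {v : Fin n} (hv : W.count v = N) : segs.length = N := by
  refine le_antisymm ?_ (hv ▸ h.count_le_length v)
  rcases Nat.eq_zero_or_pos segs.length with h0 | hpos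
  · omega
  have hlast : segs.getD (segs.length - 1) [] ∈ segs := by
    rw [List.getD_eq_getElem _ _ (by omega)]
    exact List.getElem_mem _
  obtain ⟨w, hw⟩ := List.exists_mem_of_ne_nil _ (h.2.2.1 _ hlast).1
  have hw' : segs.length - 1 < W.count w := mem_levelSet.1 (h.suppOf_getD _ ▸ hw)
  have := hle w
  omega

theorem exists_isSegmentChain_cons {segs : List (List (Fin n))} (hc : IsSegmentChain segs)
    {Λ : Fin n → Fin n → ℕ} {z : Fin n} (hadm : Admissible Λ (z :: segs.flatten)) :
    ∃ segs', IsSegmentChain segs' ∧ Sim (edges Λ) (z :: segs.flatten) segs'.flatten := by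
  induction segs generalizing Λ with
  | nil => exact ⟨[[z]], ⟨by simp, by simp, by simp, trivial⟩, by simpa using .refl⟩
  | cons L rest ih =>
    obtain ⟨hLne, hLnd, hsub, hrest⟩ := hc
    by_cases hzL : z ∈ L
    · obtain ⟨A, B, rfl⟩ := List.append_of_mem hzL
      have hnd' := List.perm_middle.nodup_iff.1 hLnd
      -- no `b ∈ B` is adjacent to `z`, as the prefix `z A z` has no `b`
      have hB : ∀ b ∈ B, edges Λ z b = 0 := by
        intro b hb
        by_contra he
        have hbz : b ≠ z := by rintro rfl; exact (List.nodup_cons.1 hnd').1 (by simp [hb])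
        have hbA : b ∉ A := fun hbA =>
          List.disjoint_of_nodup_append (List.nodup_cons.1 hnd').2 hbA hb
        have hpre : Admissible Λ (z :: A ++ [z]) :=
          (admissible_append.1 (by simpa using hadm)).1
        have hbz' : Λ b z ≠ 0 := by
          have := (admissible_cons.1 hpre).1 b
          unfold edges at he
          omega
        have hb0 : (z :: A ++ [z]).count b = 0 := List.count_eq_zero.2 (by simp [hbz, hbA])
        have := (hpre.count_le_count_of_arrow hbz').2
        rw [hb0] at this
        simp at this
      have hslide : Sim (edges Λ) (z :: ((A ++ z :: B) :: rest).flatten)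
          ((z :: (A ++ B)) ++ z :: rest.flatten) := by
        simpa using Sim.append_left (z :: A) (sim_cons_append hB rest.flatten)
      obtain ⟨segs', hc', hsim'⟩ := ih hrest
        (admissible_append.1 (hslide.admissible hadm)).2
      rw [edges_orientAfter] at hsim'
      have htail := Sim.append_left (z :: (A ++ B)) hsim'
      refine ⟨(z :: (A ++ B)) :: segs', ⟨by simp, hnd', fun v hv => ?_, hc'⟩,
        hslide.trans htail⟩
      rcases List.mem_cons.1 (hsim'.perm.mem_iff.2 hv) with rfl | hv
      · exact List.mem_cons_self
      · exact List.perm_middle.mem_iff.1 (hsub v hv)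
    · exact ⟨(z :: L) :: rest, ⟨by simp, List.nodup_cons.2 ⟨hzL, hLnd⟩,
        fun v hv => List.mem_cons_of_mem _ (hsub v hv), hrest⟩, by simpa using .refl⟩

theorem exists_segments (hadm : Admissible Λ W) : ∃ segs, Segments Λ W segs := by
  induction W generalizing Λ with
  | nil => exact ⟨[], segments_iff.2 ⟨trivial, .refl, trivial⟩⟩
  | cons z W ih =>
    obtain ⟨hz, hW⟩ := admissible_cons.1 hadm
    obtain ⟨segs₀, h₀⟩ := ih hW
    obtain ⟨hadm₀, hsim₀, hc₀⟩ := segments_iff.1 h₀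
    rw [edges_flipO] at hsim₀
    obtain ⟨segs, hc, hsim⟩ := exists_isSegmentChain_cons hc₀ (admissible_cons.2 ⟨hz, hadm₀⟩)
    exact ⟨segs, segments_iff.2 ⟨hsim.admissible (admissible_cons.2 ⟨hz, hadm₀⟩),
      (Sim.append_left [z] hsim₀).trans hsim, hc⟩⟩

end Segments

section Hull

variable {Λ : Fin n → Fin n → ℕ} {F : Set (Fin n)}

theorem subset_hull (F : Set (Fin n)) : F ⊆ hull Λ F :=
  fun y hy => ⟨y, Or.inl hy, .refl⟩

theorem mem_hull_of_edges {z v : Fin n} (hz : z ∈ F) (he : edges Λ z v ≠ 0) : v ∈ hull Λ F :=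
  ⟨v, Or.inr ⟨z, hz, he⟩, .refl⟩

theorem mem_hull_of_pathLE {y y' : Fin n} (hy : y ∈ hull Λ F) (h : PathLE Λ y y') :
    y' ∈ hull Λ F :=
  let ⟨a, ha, hay⟩ := hy
  ⟨a, ha, hay.trans h⟩

end Hull

namespace IsSink

variable {Λ : Fin n → Fin n → ℕ} {x₁ : Fin n} {F : Set (Fin n)}

theorem eq_of_pathLE (hs : IsSink Λ x₁) {y : Fin n} (h : PathLE Λ x₁ y) : y = x₁ := by
  rcases h.cases_head with rfl | ⟨b, hb, -⟩
  · rfl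
  · exact absurd (hs b) hb

theorem upSet_eq (hs : IsSink Λ x₁) : upSet Λ x₁ = {x₁} :=
  Set.ext fun _ => ⟨hs.eq_of_pathLE, fun h => h ▸ .refl⟩

theorem pathLE_flipO (hs : IsSink Λ x₁) {a y : Fin n} (hy : y ≠ x₁) (h : PathLE Λ a y) :
    PathLE (flipO x₁ Λ) a y := by
  induction h using Relation.ReflTransGen.head_induction_on with
  | refl => exact .refl
  | head hab hrest ih =>
    rename_i a b
    have hb : b ≠ x₁ := by rintro rfl; exact hy (hs.eq_of_pathLE hrest)
    have ha : a ≠ x₁ := by rintro rfl; exact hab (hs b)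
    exact .head (by rwa [flipO_of_ne Λ ha hb]) ih

theorem pathLE_of_pathLE_flipO (hs : IsSink Λ x₁) {a y : Fin n} (ha : a ≠ x₁)
    (h : PathLE (flipO x₁ Λ) a y) : PathLE Λ a y ∧ y ≠ x₁ := by
  induction h using Relation.ReflTransGen.head_induction_on with
  | refl => exact ⟨.refl, ha⟩
  | head hab hrest ih =>
    rename_i a b
    have hb : b ≠ x₁ := by
      rintro rfl
      exact hab (by simp [flipO, hs a])
    obtain ⟨hp, hy⟩ := ih hb
    exact ⟨.head (by rwa [flipO_of_ne Λ ha hb] at hab) hp, hy⟩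

theorem pathLE_flipO_self (hs : IsSink Λ x₁) {y : Fin n} (h : PathLE (flipO x₁ Λ) x₁ y) :
    y = x₁ ∨ ∃ b, Λ b x₁ ≠ 0 ∧ PathLE Λ b y := by
  rcases h.cases_head with rfl | ⟨b, hstep, hrest⟩
  · exact Or.inl rfl
  · rw [flipO_self_left] at hstep
    have hb : b ≠ x₁ := by rintro rfl; exact hstep (hs _)
    exact Or.inr ⟨b, hstep, (hs.pathLE_of_pathLE_flipO hb hrest).1⟩

theorem upSet_flipO_of_ne (hs : IsSink Λ x₁) {x : Fin n} (hx : x ≠ x₁) :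
    upSet (flipO x₁ Λ) x = upSet Λ x \ {x₁} :=
  Set.ext fun _ => ⟨hs.pathLE_of_pathLE_flipO hx, fun ⟨hp, hy⟩ => hs.pathLE_flipO hy hp⟩

theorem upSet_flipO_self (hs : IsSink Λ x₁) :
    upSet (flipO x₁ Λ) x₁ = hull Λ (upSet Λ x₁) := by
  rw [hs.upSet_eq]
  ext y
  constructor
  · intro h
    rcases hs.pathLE_flipO_self h with rfl | ⟨b, hb, hp⟩
    · exact subset_hull _ rfl
    · exact mem_hull_of_pathLE (mem_hull_of_edges rfl (by unfold edges; omega)) hp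
  · rintro ⟨a, ha, hp⟩
    by_cases hy : y = x₁
    · exact hy ▸ .refl
    rcases ha with ha | ⟨z, hz, he⟩
    · exact absurd (hs.eq_of_pathLE (Set.mem_singleton_iff.1 ha ▸ hp)) hy
    · rw [Set.mem_singleton_iff.1 hz] at he
      have hstep : flipO x₁ Λ x₁ a ≠ 0 := by
        rw [flipO_self_left]; have := hs a; unfold edges at he; omega
      exact .head hstep (hs.pathLE_flipO hy hp)

theorem hull_flipO_eq_of_mem (hs : IsSink Λ x₁) (hF : x₁ ∈ F)
    (hN : ∀ v, edges Λ x₁ v ≠ 0 → v ∈ F) : hull (flipO x₁ Λ) F = hull Λ F := by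
  ext y
  constructor
  · rintro ⟨a, ha, hp⟩
    rw [edges_flipO] at ha
    by_cases hax : a = x₁
    · subst hax
      rcases hs.pathLE_flipO_self hp with rfl | ⟨b, hb, hpb⟩
      · exact subset_hull _ hF
      · exact ⟨b, Or.inl (hN b (by unfold edges; omega)), hpb⟩
    · exact ⟨a, ha, (hs.pathLE_of_pathLE_flipO hax hp).1⟩
  · rintro ⟨a, ha, hp⟩
    by_cases hy : y = x₁
    · rw [hy]
      exact subset_hull _ hF
    · exact ⟨a, by rwa [edges_flipO], hs.pathLE_flipO hy hp⟩

theorem hull_flipO_diff_singleton (hs : IsSink Λ x₁) (hF : x₁ ∈ F) {z : Fin n} (hz : z ∈ F)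
    (hzx : z ≠ x₁) (he : edges Λ z x₁ ≠ 0) : hull (flipO x₁ Λ) (F \ {x₁}) = hull Λ F := by
  have hx₁ : x₁ ∈ hull (flipO x₁ Λ) (F \ {x₁}) :=
    mem_hull_of_edges ⟨hz, hzx⟩ (by rwa [edges_flipO])
  ext y
  constructor
  · rintro ⟨a, ha, hp⟩
    rw [edges_flipO] at ha
    by_cases hax : a = x₁
    · subst hax
      rcases hs.pathLE_flipO_self hp with rfl | ⟨b, hb, hpb⟩
      · exact subset_hull _ hF
      · exact mem_hull_of_pathLE (mem_hull_of_edges hF (by unfold edges; omega)) hpb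
    · refine ⟨a, ?_, (hs.pathLE_of_pathLE_flipO hax hp).1⟩
      rcases ha with ⟨haF, -⟩ | ⟨z', ⟨hz'F, -⟩, hz'e⟩
      exacts [Or.inl haF, Or.inr ⟨z', hz'F, hz'e⟩]
  · rintro ⟨a, ha, hp⟩
    by_cases hy : y = x₁
    · exact hy ▸ hx₁
    have hax : a ≠ x₁ := by rintro rfl; exact hy (hs.eq_of_pathLE hp)
    have hp' := hs.pathLE_flipO hy hp
    rcases ha with haF | ⟨z', hz'F, hz'e⟩
    · exact ⟨a, Or.inl ⟨haF, hax⟩, hp'⟩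
    by_cases hz'x : z' = x₁
    · subst hz'x
      have hstep : flipO z' Λ z' a ≠ 0 := by
        rw [flipO_self_left]; have := hs a; unfold edges at hz'e; omega
      exact mem_hull_of_pathLE hx₁ (.head hstep hp')
    · exact ⟨a, Or.inr ⟨z', ⟨hz'F, hz'x⟩, by rwa [edges_flipO]⟩, hp'⟩

theorem hull_flipO_eq_diff_of_not_mem (hs : IsSink Λ x₁) (hxF : x₁ ∉ F)
    (hN : ∀ z ∈ F, edges Λ z x₁ = 0) : hull (flipO x₁ Λ) F = hull Λ F \ {x₁} := by
  have hbase : ∀ {a}, (a ∈ F ∨ ∃ z ∈ F, edges Λ z a ≠ 0) → a ≠ x₁ := by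
    rintro a (h | ⟨z, hz, he⟩) rfl
    exacts [hxF h, he (hN z hz)]
  ext y
  constructor
  · rintro ⟨a, ha, hp⟩
    rw [edges_flipO] at ha
    obtain ⟨hp', hy⟩ := hs.pathLE_of_pathLE_flipO (hbase ha) hp
    exact ⟨⟨a, ha, hp'⟩, hy⟩
  · rintro ⟨⟨a, ha, hp⟩, hy⟩
    exact ⟨a, by rwa [edges_flipO], hs.pathLE_flipO hy hp⟩

end IsSink

section Principal

variable {Λ : Fin n → Fin n → ℕ} {W T : List (Fin n)} {r : ℕ} {x x₁ : Fin n}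

def PrincipalLevels (Λ : Fin n → Fin n → ℕ) (W : List (Fin n)) (r : ℕ) (x : Fin n) : Prop :=
  (∀ v, W.count v ≤ r) ∧ 0 < r ∧
  (∀ i, i + 1 < r → levelSet W i = hull Λ (levelSet W (i + 1))) ∧
  levelSet W (r - 1) = upSet Λ x

theorem PrincipalLevels.count_eq (h : PrincipalLevels Λ W r x) : W.count x = r := by
  obtain ⟨hle, hr, -, hlast⟩ := h
  have hx : x ∈ levelSet W (r - 1) := hlast ▸ Relation.ReflTransGen.refl
  have := hle x
  rw [mem_levelSet] at hx
  omega

theorem Segments.principalSegs_iff {segs : List (List (Fin n))} (h : Segments Λ W segs) :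
    PrincipalSegs Λ segs r x ↔ PrincipalLevels Λ W r x := by
  simp only [PrincipalSegs, h.suppOf_getD]
  exact ⟨fun ⟨hlen, hrest⟩ => ⟨fun v => hlen ▸ h.count_le_length v, hrest⟩,
    fun hL => ⟨h.length_eq hL.1 hL.count_eq, hL.2⟩⟩

theorem Admissible.edges_eq_zero_of_mem_levelSet (hadm : Admissible Λ (x₁ :: T)) {i : ℕ}
    (hi : (x₁ :: T).count x₁ ≤ i) {z : Fin n} (hz : z ∈ levelSet (x₁ :: T) i) :
    edges Λ z x₁ = 0 := by
  by_contra he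
  have := hadm.count_le_count_head he
  rw [mem_levelSet] at hz
  omega

theorem PrincipalLevels.tail_hull_of_lt (hs : IsSink Λ x₁) (h : PrincipalLevels Λ (x₁ :: T) r x)
    {i : ℕ} (hi : i + 2 < (x₁ :: T).count x₁) :
    levelSet T i = hull (flipO x₁ Λ) (levelSet T (i + 1)) := by
  obtain ⟨hle, -, hhull, -⟩ := h
  have hm := hle x₁
  rw [levelSet_cons_of_ne (a := x₁) (i := i) (by omega),
    levelSet_cons_of_ne (a := x₁) (i := i + 1) (by omega), hhull i (by omega)]
  refine (hs.hull_flipO_eq_of_mem (mem_levelSet.2 (by omega)) fun v hv => ?_).symm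
  rw [hhull (i + 1) (by omega)]
  exact mem_hull_of_edges (mem_levelSet.2 hi) hv

theorem PrincipalLevels.tail_self (hadm : Admissible Λ (x :: T)) (hT : T ≠ [])
    (h : PrincipalLevels Λ (x :: T) r x) : PrincipalLevels (flipO x Λ) T (r - 1) x := by
  have hs : IsSink Λ x := (admissible_cons.1 hadm).1
  have hcx := h.count_eq
  have hlow := fun i (hi : i + 2 < (x :: T).count x) => h.tail_hull_of_lt hs hi
  obtain ⟨-, hr, hhull, hlast⟩ := h
  have hTle : ∀ v, T.count v ≤ r - 1 := by
    have htop : levelSet T (r - 1) = ∅ := by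
      rw [levelSet_cons_of_le (a := x) (by omega), hlast, hs.upSet_eq, Set.sdiff_self]
    intro v
    have : v ∉ levelSet T (r - 1) := htop ▸ Set.notMem_empty v
    simpa using this
  obtain ⟨t, ht⟩ := List.exists_mem_of_ne_nil T hT
  have hr2 : 2 ≤ r := by
    have := hTle t
    have := List.count_pos_iff.2 ht
    omega
  refine ⟨hTle, by omega, fun i hi => hlow i (by omega), ?_⟩
  have e : r - 1 - 1 + 1 = r - 1 := by omega
  rw [levelSet_cons_of_ne (a := x) (i := r - 1 - 1) (by omega), hhull _ (by omega), e, hlast,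
    hs.upSet_flipO_self]

theorem PrincipalLevels.exists_edges_of_ne (hadm : Admissible Λ (x₁ :: T)) (hne : x₁ ≠ x)
    (h : PrincipalLevels Λ (x₁ :: T) r x) :
    ∃ z ∈ levelSet (x₁ :: T) ((x₁ :: T).count x₁ - 1), z ≠ x₁ ∧ edges Λ z x₁ ≠ 0 := by
  have hs : IsSink Λ x₁ := (admissible_cons.1 hadm).1
  obtain ⟨hle, hr, hhull, hlast⟩ := h
  have hm : 0 < (x₁ :: T).count x₁ := List.count_pos_iff.2 List.mem_cons_self
  obtain ⟨a, hax, hpa, hup⟩ : ∃ a, a ≠ x₁ ∧ PathLE Λ a x₁ ∧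
      ∀ y, PathLE Λ a y → y ∈ levelSet (x₁ :: T) ((x₁ :: T).count x₁ - 1) := by
    rcases (hle x₁).lt_or_eq with hlt | heq
    · have e : (x₁ :: T).count x₁ - 1 + 1 = (x₁ :: T).count x₁ := by omega
      have hhull' := hhull ((x₁ :: T).count x₁ - 1) (by omega)
      rw [e] at hhull'
      obtain ⟨a, ha, hpa⟩ : x₁ ∈ hull Λ (levelSet (x₁ :: T) ((x₁ :: T).count x₁)) :=
        hhull' ▸ mem_levelSet.2 (by omega)
      refine ⟨a, ?_, hpa, fun y hy => hhull' ▸ ⟨a, ha, hy⟩⟩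
      rintro rfl
      rcases ha with ha | ⟨z, hz, he⟩
      · exact (lt_irrefl _) (mem_levelSet.1 ha)
      · exact he (hadm.edges_eq_zero_of_mem_levelSet le_rfl hz)
    · have hx₁ : x₁ ∈ levelSet (x₁ :: T) (r - 1) := mem_levelSet.2 (by omega)
      rw [hlast] at hx₁
      rw [heq, hlast]
      exact ⟨x, hne.symm, hx₁, fun _ hy => hy⟩
  obtain ⟨u, hau, hux⟩ := (hpa.cases_tail).resolve_left hax.symm
  have hu : u ≠ x₁ := by rintro rfl; exact hux (hs _)
  exact ⟨u, hup u hau, hu, by unfold edges; omega⟩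

theorem PrincipalLevels.tail_of_ne (hadm : Admissible Λ (x₁ :: T)) (hne : x₁ ≠ x)
    (h : PrincipalLevels Λ (x₁ :: T) r x) : PrincipalLevels (flipO x₁ Λ) T r x := by
  have hs : IsSink Λ x₁ := (admissible_cons.1 hadm).1
  obtain ⟨z, hz, hzx, hze⟩ := h.exists_edges_of_ne hadm hne
  obtain ⟨hle, hr, hhull, hlast⟩ := h
  have hm : (x₁ :: T).count x₁ ≤ r := hle x₁
  refine ⟨fun v => List.count_le_count_cons.trans (hle v), hr, fun i hi => ?_, ?_⟩
  · rcases lt_trichotomy (i + 2) ((x₁ :: T).count x₁) with hlt | heq | hgt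
    · exact PrincipalLevels.tail_hull_of_lt hs ⟨hle, hr, hhull, hlast⟩ hlt
    · have e : i + 1 = (x₁ :: T).count x₁ - 1 := by omega
      rw [levelSet_cons_of_ne (a := x₁) (i := i) (by omega),
        levelSet_cons_of_le (a := x₁) (i := i + 1) (by omega), hhull i hi, e]
      exact (hs.hull_flipO_diff_singleton (mem_levelSet.2 (by omega)) hz hzx hze).symm
    · rw [levelSet_cons_of_le (a := x₁) (i := i) (by omega),
        levelSet_cons_of_ne (a := x₁) (i := i + 1) (by omega), hhull i hi]
      exact (hs.hull_flipO_eq_diff_of_not_mem (fun h => by rw [mem_levelSet] at h; omega)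
        fun z hz => hadm.edges_eq_zero_of_mem_levelSet (by omega) hz).symm
  · rw [levelSet_cons_of_le (a := x₁) (by omega), hlast, hs.upSet_flipO_of_ne hne.symm]

theorem PrincipalLevels.tail (hadm : Admissible Λ (x₁ :: T)) (hT : T ≠ [])
    (h : PrincipalLevels Λ (x₁ :: T) r x) :
    PrincipalLevels (flipO x₁ Λ) T (if x₁ = x then r - 1 else r) x := by
  split_ifs with hx
  · subst hx
    exact h.tail_self hadm hT
  · exact h.tail_of_ne hadm hx

end Principal

theorem principal_tail_general
    (n : ℕ) (Λ : Fin n → Fin n → ℕ)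
    (r : ℕ) (x x₁ : Fin n) (S T : List (Fin n))
    (hadm : Admissible Λ S) (hlen : 1 < S.length) (hcons : S = x₁ :: T)
    (hprin : IsPrincipalSeq Λ r x S) :
    Admissible (flipO x₁ Λ) T ∧ IsPrincipal (flipO x₁ Λ) T ∧
    ∀ segsS segsT : List (List (Fin n)),
      Segments Λ S segsS → PrincipalSegs Λ segsS r x →
      Segments (flipO x₁ Λ) T segsT →
      suppOf (segsT.getD (segsT.length - 1) []) = upSet (flipO x₁ Λ) x ∧
      (x₁ = x → segsT.length = r - 1 ∧
        ∀ i, 0 < i → i < r →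
          suppOf (segsT.getD (i-1) []) = suppOf (segsS.getD (i-1) [])) ∧
      (x₁ ≠ x → segsT.length = r ∧
        (∀ i, 0 < i → i ≤ r → i ≠ S.count x₁ →
          suppOf (segsT.getD (i-1) []) = suppOf (segsS.getD (i-1) [])) ∧
        suppOf (segsT.getD (S.count x₁ - 1) []) =
          suppOf (segsS.getD (S.count x₁ - 1) []) \ {x₁}) := by
  subst hcons
  have hTadm : Admissible (flipO x₁ Λ) T := (admissible_cons.1 hadm).2
  obtain ⟨segs, hseg, hP⟩ := hprin
  have hS := hseg.principalSegs_iff.1 hP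
  have hT := hS.tail hadm (by rintro rfl; simp at hlen)
  refine ⟨hTadm, ?_, fun segsS segsT hsegS _ hsegT => ?_⟩
  · obtain ⟨segsT, hsegT⟩ := exists_segments hTadm
    exact ⟨_, x, segsT, hsegT, hsegT.principalSegs_iff.2 hT⟩
  obtain ⟨hlenT, -, -, hlast⟩ := hsegT.principalSegs_iff.2 hT
  simp only [hsegS.suppOf_getD, hsegT.suppOf_getD] at hlast ⊢
  refine ⟨hlenT ▸ hlast, fun hx => ?_, fun hx => ?_⟩
  · subst hx
    rw [if_pos rfl] at hlenT
    exact ⟨hlenT, fun i hi hir => levelSet_cons_of_ne (by rw [hS.count_eq]; omega)⟩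
  · rw [if_neg hx] at hlenT
    exact ⟨hlenT, fun i hi _ him => levelSet_cons_of_ne (by omega),
      levelSet_cons_of_le (by omega)⟩

theorem principal_tail
    (n : ℕ) (hn : 2 ≤ n) (Λ : Fin n → Fin n → ℕ)
    (hloop : ∀ a, Λ a a = 0)
    (hconn : ∀ a b : Fin n, Relation.ReflTransGen (fun u v => edges Λ u v ≠ 0) a b)
    (hacyc : ∀ a : Fin n, ¬ Relation.TransGen (fun u v => Λ u v ≠ 0) a a)
    (r : ℕ) (x x₁ : Fin n) (S T : List (Fin n))
    (hadm : Admissible Λ S) (hlen : 1 < S.length) (hcons : S = x₁ :: T)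
    (hprin : IsPrincipalSeq Λ r x S) :
    Admissible (flipO x₁ Λ) T ∧ IsPrincipal (flipO x₁ Λ) T ∧
    ∀ segsS segsT : List (List (Fin n)),
      Segments Λ S segsS → PrincipalSegs Λ segsS r x →
      Segments (flipO x₁ Λ) T segsT →
      suppOf (segsT.getD (segsT.length - 1) []) = upSet (flipO x₁ Λ) x ∧
      (x₁ = x → segsT.length = r - 1 ∧
        ∀ i, 0 < i → i < r →
          suppOf (segsT.getD (i-1) []) = suppOf (segsS.getD (i-1) [])) ∧
      (x₁ ≠ x → segsT.length = r ∧
        (∀ i, 0 < i → i ≤ r → i ≠ S.count x₁ →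
          suppOf (segsT.getD (i-1) []) = suppOf (segsS.getD (i-1) [])) ∧
        suppOf (segsT.getD (S.count x₁ - 1) []) =
          suppOf (segsS.getD (S.count x₁ - 1) []) \ {x₁}) :=
  principal_tail_general n Λ r x x₁ S T hadm hlen hcons hprin

end KP
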